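/- arXiv:2012.06561 — 8 statements merged into one kernel-verified Lean document; each statement's English description precedes it below -/
import Mathlib

section
/- Soundness of Introspection of Comprehension: in any epistemic model with meanings, for any state w, meaning m ∈ M_w, agent a, and formula φ, if (w,m) ⊨ C_a φ then (w,m) ⊨ K_a C_a φ. -/
/-- An epistemic model with meanings. -/
structure EMM (Agent Var : Type) where
  W : Type
  rel : Agent → W → W → Prop
  equiv : ∀ a, Equivalence (rel a)
  M : W → Type
  nonempty : ∀ w, Nonempty (M w)
  val : (w : W) → Var → Set (M w)

/-- Formulas of the bimodal language. -/
inductive Form (Agent Var : Type) : Type where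
  | var : Var → Form Agent Var
  | neg : Form Agent Var → Form Agent Var
  | imp : Form Agent Var → Form Agent Var → Form Agent Var
  | K : Agent → Form Agent Var → Form Agent Var
  | C : Agent → Form Agent Var → Form Agent Var

variable {Agent Var : Type}

/-- Satisfaction relation. -/
def Sat (Mo : EMM Agent Var) : Form Agent Var → (w : Mo.W) → Mo.M w → Prop
  | .var p, w, m => m ∈ Mo.val w p
  | .neg φ, w, m => ¬ Sat Mo φ w m
  | .imp φ ψ, w, m => Sat Mo φ w m → Sat Mo ψ w m
  | .K a φ, w, _ => ∀ u, Mo.rel a w u → ∀ m' : Mo.M u, Sat Mo φ u m'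
  | .C a φ, w, _ => ∀ u, Mo.rel a w u → ∀ m' m'' : Mo.M u, Sat Mo φ u m' → Sat Mo φ u m''

theorem Sat.C_of_rel {Mo : EMM Agent Var} {a : Agent} {φ : Form Agent Var} {w u : Mo.W}
    {m : Mo.M w} (h : Sat Mo (.C a φ) w m) (hwu : Mo.rel a w u) (m' : Mo.M u) :
    Sat Mo (.C a φ) u m' :=
  fun v huv => h v ((Mo.equiv a).trans hwu huv)

theorem stmt5 (Mo : EMM Agent Var) (w : Mo.W) (m : Mo.M w) (a : Agent)
    (φ : Form Agent Var) (h : Sat Mo (.C a φ) w m) : Sat Mo (.K a (.C a φ)) w m :=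
  fun _ hwu => h.C_of_rel hwu
end

section
/- Soundness of Comprehension of Negation: in any epistemic model with meanings, for any state w, meaning m ∈ M_w, agent a, and formula φ, if (w,m) ⊨ C_a φ then (w,m) ⊨ C_a ¬φ. -/
variable {Agent Var : Type}

theorem stmt6 (Mo : EMM Agent Var) (w : Mo.W) (m : Mo.M w) (a : Agent)
    (φ : Form Agent Var) (h : Sat Mo (.C a φ) w m) : Sat Mo (.C a (.neg φ)) w m :=
  -- the clause for `φ` with the two meanings swapped is the contrapositive of the clause for `¬φ`
  fun u hwu m' m'' hnot_m' h_m'' => hnot_m' (h u hwu m'' m' h_m'')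
end

section
/- Soundness of Comprehension of Implication: in any epistemic model with meanings, for any state w, meaning m ∈ M_w, agent a, and formulas φ, ψ: if (w,m) ⊨ C_a φ and (w,m) ⊨ C_a ψ, then (w,m) ⊨ C_a(φ → ψ). -/
variable {Agent Var : Type}

-- The converse direction comes from applying `C a φ` to the swapped pair `m'', m'`.
theorem sat_C_iff (Mo : EMM Agent Var) (a : Agent) (φ : Form Agent Var) (w : Mo.W) (m : Mo.M w) :
    Sat Mo (.C a φ) w m ↔
      ∀ u, Mo.rel a w u → ∀ m' m'' : Mo.M u, (Sat Mo φ u m' ↔ Sat Mo φ u m'') :=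
  ⟨fun h u hu m' m'' => ⟨h u hu m' m'', h u hu m'' m'⟩,
    fun h u hu m' m'' => (h u hu m' m'').mp⟩

theorem stmt7 (Mo : EMM Agent Var) (w : Mo.W) (m : Mo.M w) (a : Agent)
    (φ ψ : Form Agent Var) (h1 : Sat Mo (.C a φ) w m) (h2 : Sat Mo (.C a ψ) w m) :
    Sat Mo (.C a (.imp φ ψ)) w m := by
  rw [sat_C_iff] at h1 h2 ⊢
  intro u hu m' m''
  exact imp_congr (h1 u hu m' m'') (h2 u hu m' m'')
end

section
/- Soundness of the Substitution axiom: in any epistemic model with meanings, for any state w, meaning m ∈ M_w, agent a, and formulas φ, ψ: if (w,m) ⊨ K_a(φ ↔ ψ) and (w,m) ⊨ C_a φ, then (w,m) ⊨ C_a ψ. -/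
variable {Agent Var : Type}

/-- Conjunction defined through negation and implication. -/
def Form.and (φ ψ : Form Agent Var) : Form Agent Var := .neg (.imp φ (.neg ψ))

/-- Biconditional defined as the conjunction of the two implications. -/
def Form.iff (φ ψ : Form Agent Var) : Form Agent Var := (Form.imp φ ψ).and (Form.imp ψ φ)

theorem sat_and (Mo : EMM Agent Var) (φ ψ : Form Agent Var) (w : Mo.W) (m : Mo.M w) :
    Sat Mo (φ.and ψ) w m ↔ Sat Mo φ w m ∧ Sat Mo ψ w m := by
  simp only [Form.and, Sat, Classical.not_imp, not_not]

theorem sat_iff (Mo : EMM Agent Var) (φ ψ : Form Agent Var) (w : Mo.W) (m : Mo.M w) :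
    Sat Mo (φ.iff ψ) w m ↔ (Sat Mo φ w m ↔ Sat Mo ψ w m) := by
  simp only [Form.iff, sat_and, Sat, iff_def]

theorem sat_C_congr (Mo : EMM Agent Var) (a : Agent) (φ ψ : Form Agent Var) (w : Mo.W)
    (m : Mo.M w) (h : ∀ u, Mo.rel a w u → ∀ n : Mo.M u, Sat Mo φ u n ↔ Sat Mo ψ u n) :
    Sat Mo (.C a φ) w m ↔ Sat Mo (.C a ψ) w m := by
  simp only [Sat]
  refine forall₂_congr fun u hu => forall₂_congr fun m' m'' => ?_
  rw [h u hu m', h u hu m'']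

theorem stmt8 (Mo : EMM Agent Var) (w : Mo.W) (m : Mo.M w) (a : Agent)
    (φ ψ : Form Agent Var) (h1 : Sat Mo (.K a (φ.iff ψ)) w m)
    (h2 : Sat Mo (.C a φ) w m) : Sat Mo (.C a ψ) w m :=
  (sat_C_congr Mo a φ ψ w m fun u hu n => (sat_iff Mo φ ψ u n).mp (h1 u hu n)).mp h2
end

section
/- Soundness of the Comprehension of Comprehension axiom: in any epistemic model with meanings, for any state w, meaning m ∈ M_w, any agents a, b, and any formula φ: (w,m) ⊨ C_a C_b φ. In other words, C_a C_b φ is valid. -/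
variable {Agent Var : Type}

section

variable (Mo : EMM Agent Var)

theorem sat_C_of_meaning_invariant {ψ : Form Agent Var}
    (h : ∀ u (m' m'' : Mo.M u), Sat Mo ψ u m' → Sat Mo ψ u m'') (a : Agent) (w : Mo.W)
    (m : Mo.M w) : Sat Mo (.C a ψ) w m :=
  fun u _ => h u

-- The clause of `Sat` for `C` never inspects the meaning.
theorem sat_C_meaning_invariant (a : Agent) (φ : Form Agent Var) (u : Mo.W)
    (m' m'' : Mo.M u) : Sat Mo (.C a φ) u m' → Sat Mo (.C a φ) u m'' :=
  id

end

theorem stmt9 (Mo : EMM Agent Var) (w : Mo.W) (m : Mo.M w) (a b : Agent)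
    (φ : Form Agent Var) : Sat Mo (.C a (.C b φ)) w m :=
  sat_C_of_meaning_invariant Mo (sat_C_meaning_invariant Mo b φ) a w m
end

section
/- Soundness of the Incomprehensible axiom: in any epistemic model with meanings, for any state w, meaning m ∈ M_w, any agents a, b, and any formula φ: (w,m) ⊨ C_a(C_b φ → φ). That is, C_a(C_b φ → φ) is valid. -/
variable {Agent Var : Type}

/-! The truth of `C_b φ` does not depend on the meaning, and where it holds, reflexivity of `∼_b`
makes `φ` meaning-invariant. Hence `C_b φ → φ` has the same truth value under all meanings at every
world, which is exactly what `C_a` demands. -/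

def MeaningInvariantAt (Mo : EMM Agent Var) (φ : Form Agent Var) (u : Mo.W) : Prop :=
  ∀ m' m'' : Mo.M u, Sat Mo φ u m' → Sat Mo φ u m''

theorem sat_C_of_forall_meaningInvariantAt {Mo : EMM Agent Var} {φ : Form Agent Var} (a : Agent)
    (h : ∀ u, MeaningInvariantAt Mo φ u) (w : Mo.W) (m : Mo.M w) : Sat Mo (.C a φ) w m :=
  fun u _ => h u

theorem sat_C_congr_meaning {Mo : EMM Agent Var} {φ : Form Agent Var} {a : Agent} {w : Mo.W}
    {m : Mo.M w} (h : Sat Mo (.C a φ) w m) (m' : Mo.M w) : Sat Mo (.C a φ) w m' :=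
  h

theorem meaningInvariantAt_of_sat_C {Mo : EMM Agent Var} {φ : Form Agent Var} {b : Agent}
    {u : Mo.W} {m : Mo.M u} (h : Sat Mo (.C b φ) u m) : MeaningInvariantAt Mo φ u :=
  h u ((Mo.equiv b).refl u)

theorem meaningInvariantAt_imp_C_self (Mo : EMM Agent Var) (b : Agent) (φ : Form Agent Var)
    (u : Mo.W) : MeaningInvariantAt Mo (.imp (.C b φ) φ) u := by
  intro m' m'' hImp hC
  exact meaningInvariantAt_of_sat_C hC m' m'' (hImp (sat_C_congr_meaning hC m'))

theorem stmt10 (Mo : EMM Agent Var) (w : Mo.W) (m : Mo.M w) (a b : Agent)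
    (φ : Form Agent Var) : Sat Mo (.C a (.imp (.C b φ) φ)) w m :=
  sat_C_of_forall_meaningInvariantAt a (meaningInvariantAt_imp_C_self Mo b φ) w m
end

section
/- In the two-state, two-meaning 'left' and 'right' models (single agent a, single propositional variable p; both models have states {1,2} with 1 ∼_a 2, meanings {1,2} in both states; left valuation: π^l_1(p) = {1,2}, π^l_2(p) = ∅; right valuation: π^r_1(p) = {1}, π^r_2(p) = {2}), for every formula φ in the K-fragment (built from p, ¬, →, K_a only) and all x, y ∈ {1,2}: (x,y) ⊨_l φ if and only if (y,x) ⊨_r φ. -/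
variable {Agent Var : Type}

/-- Membership in the K-fragment: no occurrence of the C modality. -/
def noC : Form Agent Var → Prop
  | .var _ => True
  | .neg φ => noC φ
  | .imp φ ψ => noC φ ∧ noC ψ
  | .K _ φ => noC φ
  | .C _ _ => False

/-- The left model: states 0,1 (named 1,2 in the paper), both indistinguishable,
meanings 0,1 (named 1,2) in each state; p true under both meanings of state 0
and under no meaning of state 1. -/
def leftM : EMM Unit Unit where
  W := Fin 2
  rel := fun _ _ _ => True
  equiv := fun _ => ⟨fun _ => trivial, fun _ => trivial, fun _ _ => trivial⟩
  M := fun _ => Fin 2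
  nonempty := fun _ => ⟨0⟩
  val := fun w _ => {m : Fin 2 | w = 0}

/-- The right model: same states, relation and meanings; p true exactly under
meaning 0 (named 1) of each state (chosen so that y ∈ π^l_x(p) ↔ x ∈ π^r_y(p)). -/
def rightM : EMM Unit Unit where
  W := Fin 2
  rel := fun _ _ _ => True
  equiv := fun _ => ⟨fun _ => trivial, fun _ => trivial, fun _ _ => trivial⟩
  M := fun _ => Fin 2
  nonempty := fun _ => ⟨0⟩
  val := fun _ _ => {m : Fin 2 | m = 0}

theorem mem_val_leftM_iff_mem_val_rightM (x y : Fin 2) (p : Unit) :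
    y ∈ leftM.val x p ↔ x ∈ rightM.val y p :=
  Iff.rfl

theorem stmt12 (φ : Form Unit Unit) (hφ : noC φ) (x y : Fin 2) :
    Sat leftM φ x y ↔ Sat rightM φ y x := by
  induction φ generalizing x y with
  | var p => exact mem_val_leftM_iff_mem_val_rightM x y p
  | neg φ ih => exact not_congr (ih hφ x y)
  | imp φ ψ ih₁ ih₂ => exact imp_congr (ih₁ hφ.1 x y) (ih₂ hφ.2 x y)
  | K a φ ih =>
    -- Both relations are total, so `K a φ` ranges over all (state, meaning) pairs,
    -- a set the swap maps onto itself.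
    exact ⟨fun h u _ m => (ih hφ m u).mp (h m trivial u),
      fun h u _ m => (ih hφ u m).mpr (h m trivial u)⟩
  | C a φ => exact hφ.elim
end

section
/- The comprehension modality is not definable through knowledge: there exist two epistemic models with meanings and pointed states (state-meaning pairs) that satisfy exactly the same formulas of the K-fragment (built from propositional variables, ¬, →, K_a), yet one satisfies C_a p and the other does not. Consequently, no formula of the K-fragment is semantically equivalent to C_a p. -/
variable {Agent Var : Type}

/-!
Take the models on `S × S` (states × meanings, all states indistinguishable) where the truth of
`p` depends only on the state, respectively only on the meaning. Swapping state and meaning is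
invisible to the K-fragment, since `K_a` quantifies over both at once; but `C_a p` asks whether
truth varies with the meaning, which holds in the first model and fails in the second.
-/

namespace EMM

variable {S : Type} [Nonempty S]

def square (val : S → Var → Set S) : EMM Agent Var where
  W := S
  rel := fun _ _ _ => True
  equiv := fun _ => ⟨fun _ => trivial, fun _ => trivial, fun _ _ => trivial⟩
  M := fun _ => S
  nonempty := fun _ => inferInstance
  val := val

def stateModel (P : Var → S → Prop) : EMM Agent Var :=
  square fun w p => {_m | P p w}

def meaningModel (P : Var → S → Prop) : EMM Agent Var :=
  square fun _ p => {m | P p m}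

theorem sat_stateModel_iff_sat_meaningModel (P : Var → S → Prop) {φ : Form Agent Var}
    (hφ : noC φ) (w m : S) :
    Sat (stateModel P) φ w m ↔ Sat (meaningModel P) φ m w := by
  induction φ generalizing w m with
  | var p => exact Iff.rfl
  | neg φ ih => exact not_congr (ih hφ w m)
  | imp φ ψ ihφ ihψ => exact imp_congr (ihφ hφ.1 w m) (ihψ hφ.2 w m)
  | K a φ ih =>
    change (∀ u : S, True → ∀ m' : S, _) ↔ (∀ u : S, True → ∀ m' : S, _)
    simp only [true_implies]
    exact forall_comm.trans (forall₂_congr fun u m' => ih hφ m' u)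
  | C a φ => exact hφ.elim

theorem sat_C_var_stateModel (P : Var → S → Prop) (a : Agent) (p : Var) (w m : S) :
    Sat (stateModel P) (.C a (.var p)) w m :=
  fun _ _ _ _ h => h

theorem not_sat_C_var_meaningModel {P : Var → S → Prop} {p : Var} {x y : S}
    (hx : P p x) (hy : ¬ P p y) (a : Agent) (w m : S) :
    ¬ Sat (meaningModel P) (.C a (.var p)) w m :=
  fun h => hy (h w trivial x y hx)

end EMM

theorem not_equiv_K_fragment_of_separates {Mo Mo' : EMM Agent Var}
    {w : Mo.W} {m : Mo.M w} {w' : Mo'.W} {m' : Mo'.M w'} {χ : Form Agent Var}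
    (hagree : ∀ φ, noC φ → (Sat Mo φ w m ↔ Sat Mo' φ w' m'))
    (hχ : Sat Mo χ w m) (hχ' : ¬ Sat Mo' χ w' m') {ψ : Form Agent Var} (hψ : noC ψ) :
    ¬ ∀ (N : EMM Agent Var) (v : N.W) (n : N.M v), (Sat N ψ v n ↔ Sat N χ v n) :=
  fun hdef => hχ' ((hdef Mo' w' m').mp ((hagree ψ hψ).mp ((hdef Mo w m).mpr hχ)))

theorem stmt13 :
    (∃ (Mo Mo' : EMM Unit Unit) (w : Mo.W) (m : Mo.M w) (w' : Mo'.W) (m' : Mo'.M w'),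
      (∀ φ : Form Unit Unit, noC φ → (Sat Mo φ w m ↔ Sat Mo' φ w' m')) ∧
      Sat Mo (.C () (.var ())) w m ∧ ¬ Sat Mo' (.C () (.var ())) w' m') ∧
    (∀ ψ : Form Unit Unit, noC ψ →
      ¬ ∀ (Mo : EMM Unit Unit) (w : Mo.W) (m : Mo.M w),
          (Sat Mo ψ w m ↔ Sat Mo (.C () (.var ())) w m)) := by
  let P : Unit → Bool → Prop := fun _ b => b = true
  have hagree : ∀ φ : Form Unit Unit, noC φ →
      (Sat (EMM.stateModel P) φ true true ↔ Sat (EMM.meaningModel P) φ true true) :=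
    fun _ hφ => EMM.sat_stateModel_iff_sat_meaningModel P hφ true true
  have hC := EMM.sat_C_var_stateModel P () () true true
  have hC' := EMM.not_sat_C_var_meaningModel (P := P) (p := ()) (x := true) (y := false) rfl
    Bool.false_ne_true () true true
  exact ⟨⟨_, _, _, _, _, _, hagree, hC, hC'⟩,
    fun _ hψ => not_equiv_K_fragment_of_separates hagree hC hC' hψ⟩
end
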